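/- Let α ∈ (π, 2π) and let G = A_α = {z ∈ ℝ² \ {0} : the angle between the vector z and the positive x-axis e₁ is less than α/2}. Then for every x ∈ G and every r ∈ (0, 1/2], the metric ball B_s(x,r) = {y ∈ G : s_G(x,y) < r} is a convex subset of ℝ². -/

import Mathlib

/-- The triangular ratio metric `s_G(x,y) = sup_{z ∈ ∂G} |x−y|/(|z−x|+|z−y|)`. -/
noncomputable def sMetric {n : ℕ} (G : Set (EuclideanSpace ℝ (Fin n)))
    (x y : EuclideanSpace ℝ (Fin n)) : ℝ :=
  ⨆ z ∈ frontier G, dist x y / (dist z x + dist z y)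

/-- The metric ball `B_s(x,r) = {y ∈ G : s_G(x,y) < r}`. -/
def sBall {n : ℕ} (G : Set (EuclideanSpace ℝ (Fin n))) (x : EuclideanSpace ℝ (Fin n))
    (r : ℝ) : Set (EuclideanSpace ℝ (Fin n)) :=
  {y ∈ G | sMetric G x y < r}

/-!
The s-ball is the intersection, over boundary points `z`, of the regions
`{y | ‖x - y‖ < r (‖z - x‖ + ‖z - y‖)}`: a point `y ∉ G` violates the condition at a boundary
point of the segment `[x, y]`, and for `y ∈ G` the supremum defining `s_G(x, y)` is attained at a
boundary point minimising `‖z - x‖ + ‖z - y‖`.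

Each region is convex when `r ≤ 1/2`. With `a = x - z` and `w = y - z`, squaring turns the
condition into `(1 - r²)‖w‖² - 2r²‖a‖‖w‖ - 2⟪a, w⟫ < -(1 - r²)‖a‖²`, which forces `w` into the
half-space `(1 - 2r²)‖a‖² < 2(1 - r²)⟪a, w⟫`. On that half-space, as `4r² ≤ 1`, the norm `‖w‖`
stays beyond the vertex `r²‖a‖/(1 - r²)` of the parabola `s ↦ (1 - r²)s² - 2r²‖a‖s`, where the
parabola is increasing, so the left-hand side is a convex function of `w`.
-/

open Set Filter Topology RealInnerProductSpace EuclideanGeometry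

theorem ConvexOn.comp_of_mapsTo {𝕜 E α β : Type*} [Semiring 𝕜] [PartialOrder 𝕜]
    [AddCommMonoid E] [AddCommMonoid α] [PartialOrder α] [AddCommMonoid β] [PartialOrder β]
    [SMul 𝕜 E] [SMul 𝕜 α] [SMul 𝕜 β] {s : Set E} {t : Set β} {f : E → β} {g : β → α}
    (hg : ConvexOn 𝕜 t g) (hf : ConvexOn 𝕜 s f) (hg' : MonotoneOn g t) (hst : MapsTo f s t) :
    ConvexOn 𝕜 s (g ∘ f) :=
  ⟨hf.1, fun _ hx _ hy _ _ ha hb hab =>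
    (hg' (hst <| hf.1 hx hy ha hb hab) (hg.1 (hst hx) (hst hy) ha hb hab)
      (hf.2 hx hy ha hb hab)).trans (hg.2 (hst hx) (hst hy) ha hb hab)⟩

theorem IsPreconnected.inter_frontier_nonempty {X : Type*} [TopologicalSpace X] {s t : Set X}
    (hs : IsPreconnected s) (hst : (s ∩ t).Nonempty) (hst' : (s \ t).Nonempty) :
    (s ∩ frontier t).Nonempty := by
  by_contra h
  have hcover : s ⊆ interior t ∪ (closure t)ᶜ := fun p hp => by
    by_cases hpt : p ∈ closure t
    · exact Or.inl (by_contra fun hpi => h ⟨p, hp, hpt, hpi⟩)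
    · exact Or.inr hpt
  rcases hs.subset_or_subset isOpen_interior isClosed_closure.isOpen_compl
    (disjoint_compl_right.mono interior_subset_closure le_rfl) hcover with hsub | hsub
  · obtain ⟨p, hps, hpt⟩ := hst'
    exact hpt (interior_subset (hsub hps))
  · obtain ⟨p, hps, hpt⟩ := hst
    exact hsub hps (subset_closure hpt)

section Quadratic

variable {c : ℝ} (b : ℝ)

theorem convexOn_mul_sq_sub_two_mul (hc : 0 ≤ c) :
    ConvexOn ℝ univ fun s : ℝ => c * s ^ 2 - 2 * b * s := by
  refine ⟨convex_univ, fun x _ y _ t u ht hu htu => ?_⟩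
  obtain rfl : u = 1 - t := eq_sub_of_add_eq' htu
  simp only [smul_eq_mul]
  nlinarith [mul_nonneg (mul_nonneg ht hu) (mul_nonneg hc (sq_nonneg (x - y)))]

theorem monotoneOn_mul_sq_sub_two_mul (hc : 0 < c) :
    MonotoneOn (fun s : ℝ => c * s ^ 2 - 2 * b * s) (Ici (b / c)) := by
  intro s hs σ _ hsσ
  have hbs : b ≤ c * s := by rw [mem_Ici, div_le_iff₀ hc] at hs; linarith
  nlinarith [mul_nonneg (sub_nonneg.2 hsσ) (by nlinarith : 0 ≤ c * (σ + s) - 2 * b)]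

end Quadratic

section ConvexSlice

variable {E : Type*} [NormedAddCommGroup E] [InnerProductSpace ℝ E] (a : E) {r : ℝ}

theorem mul_sq_norm_lt_two_mul_inner (hr : r ^ 2 < 1) {w : E}
    (h : ‖a - w‖ < r * (‖a‖ + ‖w‖)) :
    (1 - 2 * r ^ 2) * ‖a‖ ^ 2 < 2 * (1 - r ^ 2) * ⟪a, w⟫ := by
  have hsq : ‖a‖ ^ 2 - 2 * ⟪a, w⟫ + ‖w‖ ^ 2 < (r * (‖a‖ + ‖w‖)) ^ 2 := by
    rw [← norm_sub_sq_real]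
    exact pow_lt_pow_left₀ h (norm_nonneg _) two_ne_zero
  nlinarith [mul_lt_mul_of_pos_left hsq (sub_pos.2 hr),
    sq_nonneg ((1 - r ^ 2) * ‖w‖ - r ^ 2 * ‖a‖)]

theorem div_le_norm_of_mul_sq_norm_lt_two_mul_inner (hr : 4 * r ^ 2 ≤ 1) {w : E}
    (h : (1 - 2 * r ^ 2) * ‖a‖ ^ 2 < 2 * (1 - r ^ 2) * ⟪a, w⟫) :
    r ^ 2 * ‖a‖ / (1 - r ^ 2) ≤ ‖w‖ := by
  rw [div_le_iff₀ (by linarith)]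
  by_contra! hlt
  nlinarith [real_inner_le_norm a w, mul_le_mul_of_nonneg_left hlt.le (norm_nonneg a),
    sq_nonneg ‖a‖]

theorem convexOn_halfSpace_norm_quadratic (hr : 4 * r ^ 2 ≤ 1) :
    ConvexOn ℝ {w : E | (1 - 2 * r ^ 2) * ‖a‖ ^ 2 < 2 * (1 - r ^ 2) * ⟪a, w⟫}
      fun w => (1 - r ^ 2) * ‖w‖ ^ 2 - 2 * (r ^ 2 * ‖a‖) * ‖w‖ - 2 * ⟪a, w⟫ := by
  have hr1 : 0 < 1 - r ^ 2 := by linarith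
  set H := {w : E | (1 - 2 * r ^ 2) * ‖a‖ ^ 2 < 2 * (1 - r ^ 2) * ⟪a, w⟫}
  have hH : Convex ℝ H :=
    convex_halfSpace_gt ((2 * (1 - r ^ 2)) • innerₛₗ ℝ a).isLinear _
  have hφ : ConvexOn ℝ H (fun w => (1 - r ^ 2) * ‖w‖ ^ 2 - 2 * (r ^ 2 * ‖a‖) * ‖w‖) :=
    ((convexOn_mul_sq_sub_two_mul _ hr1.le).subset (subset_univ _) (convex_Ici _)).comp_of_mapsTo
      (convexOn_norm hH) (monotoneOn_mul_sq_sub_two_mul _ hr1)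
      fun w hw => div_le_norm_of_mul_sq_norm_lt_two_mul_inner a hr hw
  exact hφ.sub (((2 : ℝ) • innerₛₗ ℝ a).concaveOn hH)

theorem convex_setOf_norm_sub_lt_mul (hr0 : 0 ≤ r) (hr : r ≤ 1 / 2) :
    Convex ℝ {w : E | ‖a - w‖ < r * (‖a‖ + ‖w‖)} := by
  have hr4 : 4 * r ^ 2 ≤ 1 := by nlinarith
  convert (convexOn_halfSpace_norm_quadratic a hr4).convex_lt (-((1 - r ^ 2) * ‖a‖ ^ 2)) using 1
  ext w
  have hsq : ‖a - w‖ < r * (‖a‖ + ‖w‖) ↔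
      (1 - r ^ 2) * ‖w‖ ^ 2 - 2 * (r ^ 2 * ‖a‖) * ‖w‖ - 2 * ⟪a, w⟫ < -((1 - r ^ 2) * ‖a‖ ^ 2) := by
    rw [← pow_lt_pow_iff_left₀ (norm_nonneg _) (by positivity) two_ne_zero, norm_sub_sq_real]
    constructor <;> intro h <;> linarith
  simp only [mem_ofPred_eq]
  exact ⟨fun h => ⟨mul_sq_norm_lt_two_mul_inner a (by linarith) h, hsq.1 h⟩,
    fun h => hsq.2 h.2⟩

theorem convex_setOf_dist_lt_mul_add_dist (x z : E) (hr0 : 0 ≤ r) (hr : r ≤ 1 / 2) :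
    Convex ℝ {y : E | dist x y < r * (dist z x + dist z y)} := by
  convert (convex_setOf_norm_sub_lt_mul (x - z) hr0 hr).translate_preimage_right (-z) using 1
  ext y
  simp only [mem_preimage, mem_ofPred_eq, dist_eq_norm, norm_sub_rev z, neg_add_eq_sub,
    sub_sub_sub_cancel_right]

end ConvexSlice

section TriangularRatio

variable {n : ℕ} {G : Set (EuclideanSpace ℝ (Fin n))} {x y z : EuclideanSpace ℝ (Fin n)}

theorem div_le_sMetric (hz : z ∈ frontier G) :
    dist x y / (dist z x + dist z y) ≤ sMetric G x y := by
  have hbdd : ∀ w, ⨆ _ : w ∈ frontier G, dist x y / (dist w x + dist w y) ≤ 1 := fun w =>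
    Real.iSup_le (fun _ => div_le_one_of_le₀ (dist_triangle_left x y w) (by positivity))
      zero_le_one
  exact (ciSup_pos hz).ge.trans (le_ciSup ⟨1, forall_mem_range.2 hbdd⟩ z)

theorem exists_mem_frontier_sMetric_le (hfr : (frontier G).Nonempty) (hx : x ∉ frontier G)
    (y : EuclideanSpace ℝ (Fin n)) :
    ∃ z ∈ frontier G, sMetric G x y ≤ dist x y / (dist z x + dist z y) := by
  obtain ⟨z₀, hz₀⟩ := hfr
  have hcoercive : Tendsto (fun z => dist z x + dist z y) (cocompact _) atTop :=
    tendsto_atTop_mono (fun z => le_add_of_nonneg_right dist_nonneg)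
      (tendsto_dist_right_cocompact_atTop x)
  obtain ⟨z, hz, hmin⟩ := (by fun_prop : Continuous fun z => dist z x + dist z y).continuousOn
    |>.exists_isMinOn' isClosed_frontier hz₀
      ((hcoercive.eventually (eventually_ge_atTop _)).filter_mono inf_le_left)
  have hpos : 0 < dist z x + dist z y :=
    add_pos_of_pos_of_nonneg (dist_pos.2 (ne_of_mem_of_not_mem hz hx)) dist_nonneg
  refine ⟨z, hz, Real.iSup_le (fun w => Real.iSup_le (fun hw => ?_) (by positivity))
    (by positivity)⟩
  exact div_le_div_of_nonneg_left dist_nonneg hpos (hmin hw)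

theorem sBall_eq_iInter (hG : IsOpen G) (hx : x ∈ G) (hfr : (frontier G).Nonempty) {r : ℝ}
    (hr : r ≤ 1) :
    sBall G x r = ⋂ z ∈ frontier G, {y | dist x y < r * (dist z x + dist z y)} := by
  have hxfr : x ∉ frontier G := fun h => hG.inter_frontier_eq.subset ⟨hx, h⟩
  have hpos : ∀ z ∈ frontier G, ∀ y, 0 < dist z x + dist z y := fun z hz _ =>
    add_pos_of_pos_of_nonneg (dist_pos.2 (ne_of_mem_of_not_mem hz hxfr)) dist_nonneg
  ext y
  simp only [sBall, mem_iInter, mem_ofPred_eq]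
  refine ⟨fun ⟨_, hy⟩ z hz => (div_lt_iff₀ (hpos z hz y)).1 ((div_le_sMetric hz).trans_lt hy),
    fun h => ⟨?_, ?_⟩⟩
  · by_contra hyG
    obtain ⟨z, hzxy, hz⟩ := (convex_segment x y).isPreconnected.inter_frontier_nonempty
      ⟨x, left_mem_segment ℝ x y, hx⟩ ⟨y, right_mem_segment ℝ x y, hyG⟩
    have hlt := h z hz
    rw [dist_comm z x, dist_add_dist_of_mem_segment hzxy] at hlt
    nlinarith [dist_nonneg (x := x) (y := y)]
  · obtain ⟨z, hz, hle⟩ := exists_mem_frontier_sMetric_le hfr hxfr y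
    exact hle.trans_lt ((div_lt_iff₀ (hpos z hz y)).2 (h z hz))

end TriangularRatio

theorem isOpen_setOf_ne_and_angle_lt {V P : Type*} [NormedAddCommGroup V]
    [InnerProductSpace ℝ V] [MetricSpace P] [NormedAddTorsor V P] {p v : P} (hv : v ≠ p)
    (β : ℝ) : IsOpen {z : P | z ≠ p ∧ ∠ z p v < β} := by
  have hcont : ContinuousOn (fun z => ∠ z p v) {z | z ≠ p} := fun z hz =>
    ((continuousAt_angle (x := (z, p, v)) hz hv).comp (f := fun z : P => (z, p, v))
      (by fun_prop)).continuousWithinAt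
  exact hcont.isOpen_inter_preimage isOpen_ne isOpen_Iio

theorem zero_mem_frontier_of_smul_mem {E : Type*} [AddCommGroup E] [Module ℝ E]
    [TopologicalSpace E] [ContinuousSMul ℝ E] {s : Set E} {x : E}
    (hs : ∀ c : ℝ, 0 < c → c • x ∈ s) (h0 : (0 : E) ∉ s) : (0 : E) ∈ frontier s := by
  refine ⟨?_, fun h => h0 (interior_subset h)⟩
  have hlim : Tendsto (fun c : ℝ => c • x) (𝓝[>] 0) (𝓝 0) :=
    ((by fun_prop : Continuous fun c : ℝ => c • x).tendsto' 0 0 (zero_smul ℝ x)).mono_left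
      nhdsWithin_le_nhds
  exact mem_closure_of_tendsto hlim (eventually_nhdsWithin_of_forall hs)

theorem sBall_wide_sector_convex_general (α : ℝ)
    (x : EuclideanSpace ℝ (Fin 2))
    (hx : x ∈ {z : EuclideanSpace ℝ (Fin 2) | z ≠ 0 ∧
      EuclideanGeometry.angle z 0 (EuclideanSpace.single 0 1) < α / 2})
    (r : ℝ) (hr : r ∈ Set.Ioc (0:ℝ) (1/2)) :
    Convex ℝ (sBall {z : EuclideanSpace ℝ (Fin 2) | z ≠ 0 ∧
      EuclideanGeometry.angle z 0 (EuclideanSpace.single 0 1) < α / 2} x r) := by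
  set G := {z : EuclideanSpace ℝ (Fin 2) | z ≠ 0 ∧ ∠ z 0 (EuclideanSpace.single 0 1) < α / 2}
  have hG : IsOpen G := isOpen_setOf_ne_and_angle_lt (by simp) (α / 2)
  have h0 : (0 : EuclideanSpace ℝ (Fin 2)) ∈ frontier G :=
    zero_mem_frontier_of_smul_mem (x := x) (fun c hc => ⟨smul_ne_zero hc.ne' hx.1,
      by rw [angle_smul_left_of_pos (p₄ := x) _ hc (by simp)]; exact hx.2⟩) fun h => h.1 rfl
  rw [sBall_eq_iInter hG hx ⟨0, h0⟩ (by linarith [hr.2])]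
  exact convex_iInter₂ fun z _ => convex_setOf_dist_lt_mul_add_dist x z hr.1.le hr.2

/-- Let α ∈ (π, 2π) and let G = A_α = {z ∈ ℝ² \ {0} : ∠(z,0,e₁) < α/2}. Then for every
x ∈ G and every r ∈ (0, 1/2], the metric ball B_s(x,r) is a convex subset of ℝ². -/
theorem sBall_wide_sector_convex (α : ℝ) (hα : α ∈ Set.Ioo Real.pi (2 * Real.pi))
    (x : EuclideanSpace ℝ (Fin 2))
    (hx : x ∈ {z : EuclideanSpace ℝ (Fin 2) | z ≠ 0 ∧
      EuclideanGeometry.angle z 0 (EuclideanSpace.single 0 1) < α / 2})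
    (r : ℝ) (hr : r ∈ Set.Ioc (0:ℝ) (1/2)) :
    Convex ℝ (sBall {z : EuclideanSpace ℝ (Fin 2) | z ≠ 0 ∧
      EuclideanGeometry.angle z 0 (EuclideanSpace.single 0 1) < α / 2} x r) :=
  sBall_wide_sector_convex_general α x hx r hr
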